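/- arXiv:2003.14005 — 3 statements merged into one kernel-verified Lean document; each statement's English description precedes it below -/
import Mathlib

section
/- Let (c,u) be a travelling-wave solution of the one-species free-boundary problem such that u is globally Lipschitz, ∂ₓu < 0 on Ω = {u > 0}, the free boundary is Γ = {(φ(y), y) : y < 0} with φ real-analytic and locally Lipschitz, (0,0) lies in the closure of Γ, and φ is Lipschitz on (-∞,-1]. Then the liminf of u(X) over points X = (x,y) ∈ Ω, as y → -∞ and dist(X, Γ) → +∞, equals 1; that is, for every ε > 0 there is R > 0 such that u(x,y) ≥ 1 - ε whenever u(x,y) > 0, y ≤ -R and dist((x,y), Γ) ≥ R. -/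
open Real Filter Topology Set Asymptotics

noncomputable section

/-- Partial derivative in the first (horizontal) variable. -/
def pdx (u : ℝ → ℝ → ℝ) (x y : ℝ) : ℝ := deriv (fun t => u t y) x

/-- Partial derivative in the second (vertical) variable. -/
def pdy (u : ℝ → ℝ → ℝ) (x y : ℝ) : ℝ := deriv (fun t => u x t) y

/-- Second partial derivative in the first variable. -/
def pdxx (u : ℝ → ℝ → ℝ) (x y : ℝ) : ℝ := deriv (fun t => pdx u t y) x

/-- Second partial derivative in the second variable. -/
def pdyy (u : ℝ → ℝ → ℝ) (x y : ℝ) : ℝ := deriv (fun t => pdy u x t) y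

/-- The closed lower half-plane `H = {(x,y) : y ≤ 0}`. -/
def lowerH : Set (ℝ × ℝ) := {p | p.2 ≤ 0}

/-- The positivity set `Ω = {u > 0}` inside the closed lower half-plane. -/
def posSet (u : ℝ → ℝ → ℝ) : Set (ℝ × ℝ) := {p | p.2 ≤ 0 ∧ 0 < u p.1 p.2}

/-- The free boundary `Γ = ∂Ω ∩ {y < 0}`. -/
def freeBdry (u : ℝ → ℝ → ℝ) : Set (ℝ × ℝ) :=
  frontier (posSet u) ∩ {p | p.2 < 0}

/-- A travelling-wave solution of the one-species free-boundary problem in the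
lower half-plane, with diffusivities `d` (field), `D` (road), exchange parameter `μ`
and speed `c`. -/
structure OneSpeciesTW (d D μ c : ℝ) (u : ℝ → ℝ → ℝ) : Prop where
  c_pos : 0 < c
  cont : ContinuousOn (fun p : ℝ × ℝ => u p.1 p.2) lowerH
  mem01 : ∀ x y : ℝ, y ≤ 0 → u x y ∈ Icc (0:ℝ) 1
  relOpen : ∃ V : Set (ℝ × ℝ), IsOpen V ∧ posSet u = V ∩ lowerH
  smooth : ContDiffOn ℝ 2 (fun p : ℝ × ℝ => u p.1 p.2) (posSet u ∩ {p | p.2 < 0})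
  pde : ∀ p ∈ posSet u ∩ {p : ℝ × ℝ | p.2 < 0},
      -d * (pdxx u p.1 p.2 + pdyy u p.1 p.2) + c * pdx u p.1 p.2 = 0
  grad_ext : ∃ G₁ G₂ : ℝ × ℝ → ℝ,
      ContinuousOn G₁ (posSet u ∪ freeBdry u) ∧
      ContinuousOn G₂ (posSet u ∪ freeBdry u) ∧
      (∀ p ∈ posSet u ∩ {p : ℝ × ℝ | p.2 < 0},
        G₁ p = pdx u p.1 p.2 ∧ G₂ p = pdy u p.1 p.2) ∧
      (∀ p ∈ freeBdry u, (G₁ p) ^ 2 + (G₂ p) ^ 2 = 1)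
  road_diffx : ∀ x : ℝ, 0 < u x 0 → DifferentiableAt ℝ (fun t => u t 0) x
  road_diffxx : ∀ x : ℝ, 0 < u x 0 → DifferentiableAt ℝ (fun t => pdx u t 0) x
  road_diffy : ∀ x : ℝ, 0 < u x 0 → DifferentiableAt ℝ (fun t => u x t) 0
  road : ∀ x : ℝ, 0 < u x 0 →
      -D * pdxx u x 0 + c * pdx u x 0 + (1/μ) * pdy u x 0 = 0
  lim_left : ∀ ε > 0, ∃ M : ℝ, ∀ x ≤ M, ∀ y ≤ (0:ℝ), |u x y - 1| < ε
  lim_right : ∀ y ≤ (0:ℝ), Tendsto (fun x => u x y) atTop (𝓝 0)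


/-! For `k > K` and `0 < s < c / (d (1 + k²))` the function
`w = m (1 - 2 e^{s (x - a)} cosh (s k (y - y₀)))` is a strict subsolution of
`-d Δw + c ∂ₓw = 0`, and `w ≤ 0` on the cone `x ≥ a - k |y - y₀|`. With vertex
`a = φ y₀ - C`, this cone contains the free boundary: far down because `φ` is `K`-Lipschitz,
near the road because `∂ₓu < 0` keeps `Γ` to the right of the region where `u ≈ 1`. It also
contains the part of the road where `u` is not already above `m`. Since `{u < w}` is bounded,
`w - u` attains its maximum on `closure Ω`, and at an interior maximum the equation for `u`
contradicts the strict inequality for `w`; so `w ≤ u`. At a point `(x₀, y₀)` with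
`φ y₀ - x₀ ≥ R` this gives `u ≥ m (1 - 2 e^{-s (R - C)})`. -/

theorem IsLocalMax.deriv_deriv_nonpos {f : ℝ → ℝ} {a : ℝ} (h : IsLocalMax f a)
    (hc : ContinuousAt f a) : deriv (deriv f) a ≤ 0 := by
  by_contra! hpos
  -- otherwise `a` is also a local minimum, so `f` is locally constant
  have hmin := isLocalMin_of_deriv_deriv_pos hpos h.deriv_eq_zero hc
  have hconst : f =ᶠ[𝓝 a] fun _ => f a := by
    filter_upwards [h, hmin] with t h₁ h₂ using le_antisymm h₁ h₂
  have : deriv (deriv f) a = 0 := by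
    rw [hconst.deriv.deriv_eq]
    simp
  linarith

theorem lt_of_pos_of_eq_zero_of_deriv_neg {g : ℝ → ℝ} (hg : Continuous g) (hg₀ : ∀ t, 0 ≤ g t)
    (hderiv : ∀ t, 0 < g t → deriv g t < 0) {x z : ℝ} (hx : 0 < g x) (hz : g z = 0) : x < z := by
  by_contra! hzx
  have hZ : IsCompact {t ∈ Icc z x | g t = 0} :=
    isCompact_Icc.of_isClosed_subset (isClosed_Icc.inter (isClosed_eq hg continuous_const))
      inter_subset_left
  obtain ⟨t₁, ⟨⟨hzt₁, ht₁x⟩, ht₁⟩, hmax⟩ := hZ.exists_isGreatest ⟨z, ⟨le_rfl, hzx⟩, hz⟩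
  have ht₁x : t₁ < x := ht₁x.lt_of_ne (by rintro rfl; linarith)
  have hanti : StrictAntiOn g (Icc t₁ x) := by
    refine strictAntiOn_of_deriv_neg (convex_Icc t₁ x) hg.continuousOn fun t ht => hderiv t ?_
    rw [interior_Icc] at ht
    refine (hg₀ t).lt_of_ne' fun h => ?_
    exact absurd (hmax ⟨⟨hzt₁.trans ht.1.le, ht.2.le⟩, h⟩) (not_le.2 ht.1)
  have := hanti (left_mem_Icc.2 ht₁x.le) (right_mem_Icc.2 ht₁x.le) ht₁x
  linarith

def waveOp (d c : ℝ) (f : ℝ → ℝ → ℝ) (x y : ℝ) : ℝ :=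
  -d * (pdxx f x y + pdyy f x y) + c * pdx f x y

section Slices

variable {f g : ℝ → ℝ → ℝ} {O : Set (ℝ × ℝ)}

theorem hasDerivAt_pdx_pdxx (hf : ContDiffOn ℝ 2 (fun p : ℝ × ℝ => f p.1 p.2) O) (hO : IsOpen O)
    {p : ℝ × ℝ} (hp : p ∈ O) :
    HasDerivAt (fun t => f t p.2) (pdx f p.1 p.2) p.1 ∧
      HasDerivAt (fun t => pdx f t p.2) (pdxx f p.1 p.2) p.1 := by
  have hs : IsOpen {t : ℝ | (t, p.2) ∈ O} := hO.preimage (by fun_prop)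
  have hslice : ContDiffOn ℝ 2 (fun t => f t p.2) {t : ℝ | (t, p.2) ∈ O} :=
    hf.comp (by fun_prop : ContDiff ℝ 2 fun t : ℝ => (t, p.2)).contDiffOn fun _ ht => ht
  have hslice' : ContDiffOn ℝ 1 (fun t => pdx f t p.2) {t : ℝ | (t, p.2) ∈ O} :=
    hslice.deriv_of_isOpen hs (by norm_num)
  have hp₁ : {t : ℝ | (t, p.2) ∈ O} ∈ 𝓝 p.1 := hs.mem_nhds hp
  exact ⟨((hslice.differentiableOn (by norm_num)).differentiableAt hp₁).hasDerivAt,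
    ((hslice'.differentiableOn (by norm_num)).differentiableAt hp₁).hasDerivAt⟩

theorem pdxx_le_of_isLocalMax_sub (hf : ContDiffOn ℝ 2 (fun p : ℝ × ℝ => f p.1 p.2) O)
    (hg : ContDiffOn ℝ 2 (fun p : ℝ × ℝ => g p.1 p.2) O) (hO : IsOpen O) {q : ℝ × ℝ} (hq : q ∈ O)
    (hmax : IsLocalMax (fun p : ℝ × ℝ => f p.1 p.2 - g p.1 p.2) q) :
    pdx f q.1 q.2 = pdx g q.1 q.2 ∧ pdxx f q.1 q.2 ≤ pdxx g q.1 q.2 := by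
  have hslice : IsLocalMax (fun t => f t q.2 - g t q.2) q.1 :=
    hmax.comp_continuous (g := fun t => (t, q.2)) (by fun_prop)
  have hnear : ∀ᶠ t in 𝓝 q.1, (t, q.2) ∈ O :=
    (by fun_prop : ContinuousAt (fun t : ℝ => (t, q.2)) q.1) (hO.mem_nhds hq)
  have hderiv : deriv (fun t => f t q.2 - g t q.2) =ᶠ[𝓝 q.1]
      fun t => pdx f t q.2 - pdx g t q.2 := by
    filter_upwards [hnear] with t ht
    exact ((hasDerivAt_pdx_pdxx hf hO ht).1.sub (hasDerivAt_pdx_pdxx hg hO ht).1).deriv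
  have hf₂ := hasDerivAt_pdx_pdxx hf hO hq
  have hg₂ := hasDerivAt_pdx_pdxx hg hO hq
  have h₁ := hslice.deriv_eq_zero
  have h₂ := hslice.deriv_deriv_nonpos (hf₂.1.sub hg₂.1).continuousAt
  rw [hderiv.eq_of_nhds] at h₁
  have h₃ : deriv (fun t => pdx f t q.2 - pdx g t q.2) q.1 = pdxx f q.1 q.2 - pdxx g q.1 q.2 :=
    (hf₂.2.sub hg₂.2).deriv
  rw [hderiv.deriv_eq, h₃] at h₂
  exact ⟨by linarith, by linarith⟩

theorem waveOp_le_of_isLocalMax_sub {d c : ℝ} (hd : 0 ≤ d)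
    (hf : ContDiffOn ℝ 2 (fun p : ℝ × ℝ => f p.1 p.2) O)
    (hg : ContDiffOn ℝ 2 (fun p : ℝ × ℝ => g p.1 p.2) O) (hO : IsOpen O) {q : ℝ × ℝ} (hq : q ∈ O)
    (hmax : IsLocalMax (fun p : ℝ × ℝ => f p.1 p.2 - g p.1 p.2) q) :
    waveOp d c g q.1 q.2 ≤ waveOp d c f q.1 q.2 := by
  obtain ⟨hx, hxx⟩ := pdxx_le_of_isLocalMax_sub hf hg hO hq hmax
  have hswap : ContDiff ℝ 2 fun p : ℝ × ℝ => (p.2, p.1) := by fun_prop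
  -- `y`-derivatives of `f` are `x`-derivatives of `flip f`
  have hyy : pdyy f q.1 q.2 ≤ pdyy g q.1 q.2 :=
    (pdxx_le_of_isLocalMax_sub (f := flip f) (g := flip g) (O := Prod.swap ⁻¹' O) (q := q.swap)
      (hf.comp hswap.contDiffOn fun _ hp => hp) (hg.comp hswap.contDiffOn fun _ hp => hp)
      (hO.preimage continuous_swap) hq
      (hmax.comp_continuous (g := Prod.swap) (b := q.swap) continuous_swap.continuousAt)).2
  simp only [waveOp, hx]
  nlinarith

end Slices

namespace OneSpeciesTW

variable {d D μ c : ℝ} {u : ℝ → ℝ → ℝ}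

theorem isOpen_posSet_inter (hu : OneSpeciesTW d D μ c u) :
    IsOpen (posSet u ∩ {p : ℝ × ℝ | p.2 < 0}) := by
  obtain ⟨V, hV, hVeq⟩ := hu.relOpen
  have : posSet u ∩ {p : ℝ × ℝ | p.2 < 0} = V ∩ {p : ℝ × ℝ | p.2 < 0} := by
    have hsub : {p : ℝ × ℝ | p.2 < 0} ⊆ lowerH := fun p (hp : p.2 < 0) => hp.le
    rw [hVeq, inter_assoc, inter_eq_right.2 hsub]
  rw [this]
  exact hV.inter (isOpen_lt continuous_snd continuous_const)

theorem eq_zero_of_mem_freeBdry (hu : OneSpeciesTW d D μ c u) {p : ℝ × ℝ}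
    (hp : p ∈ freeBdry u) : u p.1 p.2 = 0 := by
  refine ((hu.mem01 p.1 p.2 hp.2.le).1.eq_of_not_lt fun hpos => hp.1.2 ?_).symm
  exact interior_maximal inter_subset_left hu.isOpen_posSet_inter ⟨⟨hp.2.le, hpos⟩, hp.2⟩

theorem mem_freeBdry {p : ℝ × ℝ} (hp : p ∈ closure (posSet u)) (hp₂ : p.2 < 0)
    (hp₀ : u p.1 p.2 = 0) : p ∈ freeBdry u :=
  ⟨⟨hp, fun hint => (interior_subset hint : p ∈ posSet u).2.ne' hp₀⟩, hp₂⟩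

theorem lt_of_eq_zero (hu : OneSpeciesTW d D μ c u)
    (hmono : ∀ p ∈ posSet u, pdx u p.1 p.2 < 0) {x y z : ℝ} (hy : y < 0) (hx : 0 < u x y)
    (hz : u z y = 0) : x < z :=
  lt_of_pos_of_eq_zero_of_deriv_neg
    (hu.cont.comp_continuous (f := fun t : ℝ => (t, y)) (by fun_prop) fun _ => hy.le)
    (fun t => (hu.mem01 t y hy.le).1) (fun t ht => hmono (t, y) ⟨hy.le, ht⟩) hx hz

theorem le_of_strictSubsolution (hu : OneSpeciesTW d D μ c u) (hd : 0 ≤ d) {w : ℝ → ℝ → ℝ}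
    (hwc : ContinuousOn (fun p : ℝ × ℝ => w p.1 p.2) lowerH)
    (hw : ContDiffOn ℝ 2 (fun p : ℝ × ℝ => w p.1 p.2) (posSet u ∩ {p | p.2 < 0}))
    (hLw : ∀ p ∈ posSet u ∩ {p | p.2 < 0}, waveOp d c w p.1 p.2 < 0)
    (hbdd : Bornology.IsBounded {p : ℝ × ℝ | p.2 ≤ 0 ∧ u p.1 p.2 < w p.1 p.2})
    (hroad : ∀ x, w x 0 ≤ u x 0) (hfb : ∀ p ∈ freeBdry u, w p.1 p.2 ≤ 0)
    {p : ℝ × ℝ} (hp : p ∈ posSet u) : w p.1 p.2 ≤ u p.1 p.2 := by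
  set F : ℝ × ℝ → ℝ := fun z => w z.1 z.2 - u z.1 z.2
  have hH : closure (posSet u) ⊆ lowerH :=
    closure_minimal (fun p hp => hp.1) (isClosed_le continuous_snd continuous_const)
  by_contra! hpF
  replace hpF : 0 < F p := sub_pos.2 hpF
  obtain ⟨q, hqS, hqmax⟩ : ∃ q ∈ closure (posSet u), IsMaxOn F (closure (posSet u)) q := by
    refine ((hwc.sub hu.cont).mono hH).exists_isMaxOn' isClosed_closure (subset_closure hp) ?_
    -- off the closure of the bounded set `{u < w}`, `F ≤ 0 < F p`
    filter_upwards [inter_mem_inf hbdd.isCompact_closure.compl_mem_cocompact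
      (mem_principal_self (closure (posSet u)))] with x ⟨hx, hxS⟩
    refine (not_lt.1 fun hlt => hx (subset_closure ⟨hH hxS, ?_⟩)).trans hpF.le
    exact sub_pos.1 hlt
  have hFq : 0 < F q := hpF.trans_le (hqmax (subset_closure hp))
  have hq₂ : q.2 ≤ 0 := hH hqS
  rcases hq₂.eq_or_lt with hq₀ | hq₂
  · have := hroad q.1
    simp only [F, hq₀] at hFq
    linarith
  rcases (hu.mem01 q.1 q.2 hq₂.le).1.eq_or_lt with hq₀ | hqpos
  · have := hfb q (mem_freeBdry hqS hq₂ hq₀.symm)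
    simp only [F, ← hq₀] at hFq
    linarith
  have hqO : q ∈ posSet u ∩ {p | p.2 < 0} := ⟨⟨hq₂.le, hqpos⟩, hq₂⟩
  have hloc : IsLocalMax F q := hqmax.isLocalMax <| mem_of_superset
    (hu.isOpen_posSet_inter.mem_nhds hqO) fun x hx => subset_closure hx.1
  have := waveOp_le_of_isLocalMax_sub (c := c) hd hw hu.smooth hu.isOpen_posSet_inter hqO hloc
  have hpde : waveOp d c u q.1 q.2 = 0 := hu.pde q hqO
  linarith [hLw q hqO]

end OneSpeciesTW

def coneBarrier (m s k a b x y : ℝ) : ℝ :=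
  m * (1 - 2 * exp (s * (x - a)) * cosh (s * k * (y - b)))

section ConeBarrier

variable {m s k a b : ℝ}

theorem coneBarrier_le (hm : 0 ≤ m) (x y : ℝ) : coneBarrier m s k a b x y ≤ m := by
  have := mul_pos (exp_pos (s * (x - a))) (cosh_pos (s * k * (y - b)))
  unfold coneBarrier
  nlinarith

theorem coneBarrier_nonpos (hm : 0 ≤ m) (hs : 0 ≤ s) {x y : ℝ} (h : a ≤ x + k * |y - b|) :
    coneBarrier m s k a b x y ≤ 0 := by
  have hcosh : exp (s * (k * |y - b|)) ≤ 2 * cosh (s * k * (y - b)) := by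
    rw [cosh_eq]
    have h₁ : s * (k * |y - b|) ≤ |s * k * (y - b)| := by
      rw [abs_mul, abs_mul, abs_of_nonneg hs, mul_assoc]
      exact mul_le_mul_of_nonneg_left (mul_le_mul_of_nonneg_right (le_abs_self k)
        (abs_nonneg _)) hs
    rcases abs_cases (s * k * (y - b)) with ⟨h₂, -⟩ | ⟨h₂, -⟩ <;> rw [h₂] at h₁ <;>
      linarith [exp_le_exp.2 h₁, exp_pos (s * k * (y - b)), exp_pos (-(s * k * (y - b)))]
  have hone : 1 ≤ exp (s * (x - a)) * exp (s * (k * |y - b|)) := by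
    rw [← exp_add]
    exact one_le_exp (by nlinarith)
  have h2 : 1 ≤ 2 * exp (s * (x - a)) * cosh (s * k * (y - b)) := by
    nlinarith [exp_pos (s * (x - a))]
  exact mul_nonpos_of_nonneg_of_nonpos hm (by linarith)

theorem coneBarrier_apply_self (x : ℝ) :
    coneBarrier m s k a b x b = m * (1 - 2 * exp (s * (x - a))) := by
  simp [coneBarrier]

theorem contDiff_coneBarrier :
    ContDiff ℝ 2 (fun p : ℝ × ℝ => coneBarrier m s k a b p.1 p.2) := by
  unfold coneBarrier
  fun_prop

theorem isBounded_coneBarrier_pos (hm : 0 ≤ m) (hs : 0 ≤ s) (hk : 0 < k) (M : ℝ) :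
    Bornology.IsBounded {p : ℝ × ℝ | M ≤ p.1 ∧ 0 < coneBarrier m s k a b p.1 p.2} := by
  refine ((Metric.isBounded_Icc M a).prod (Metric.isBounded_Icc (b - (a - M) / k)
    (b + (a - M) / k))).subset fun p ⟨hM, hpos⟩ => ?_
  have hcone : p.1 + k * |p.2 - b| < a :=
    not_le.1 fun h => (coneBarrier_nonpos hm hs h).not_gt hpos
  have hk' : |p.2 - b| ≤ (a - M) / k := by
    rw [le_div_iff₀ hk]
    nlinarith [abs_nonneg (p.2 - b)]
  refine ⟨⟨hM, by nlinarith [abs_nonneg (p.2 - b)]⟩, ?_⟩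
  constructor <;> linarith [abs_le.1 hk']

theorem waveOp_coneBarrier (d c x y : ℝ) :
    waveOp d c (coneBarrier m s k a b) x y =
      2 * m * s * (d * s * (1 + k ^ 2) - c) * exp (s * (x - a)) * cosh (s * k * (y - b)) := by
  have hE (x : ℝ) : HasDerivAt (fun t => exp (s * (t - a))) (s * exp (s * (x - a))) x := by
    simpa [mul_comm] using (((hasDerivAt_id x).sub_const a).const_mul s).exp
  have hC (y : ℝ) : HasDerivAt (fun t => cosh (s * k * (t - b)))
      (s * k * sinh (s * k * (y - b))) y := by
    simpa [mul_comm] using (((hasDerivAt_id y).sub_const b).const_mul (s * k)).cosh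
  have hS (y : ℝ) : HasDerivAt (fun t => sinh (s * k * (t - b)))
      (s * k * cosh (s * k * (y - b))) y := by
    simpa [mul_comm] using (((hasDerivAt_id y).sub_const b).const_mul (s * k)).sinh
  have hx : pdx (coneBarrier m s k a b) = fun x y =>
      -(2 * m * s) * exp (s * (x - a)) * cosh (s * k * (y - b)) := by
    ext x y
    exact ((((hE x).const_mul 2).mul_const _).const_sub 1 |>.const_mul m).deriv.trans (by ring)
  have hxx : pdxx (coneBarrier m s k a b) x y =
      -(2 * m * s * s) * exp (s * (x - a)) * cosh (s * k * (y - b)) := by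
    simp only [pdxx, hx]
    exact (((hE x).const_mul _).mul_const _).deriv.trans (by ring)
  have hy : pdy (coneBarrier m s k a b) = fun x y =>
      -(2 * m * s * k) * exp (s * (x - a)) * sinh (s * k * (y - b)) := by
    ext x y
    exact (((hC y).const_mul (2 * exp (s * (x - a)))).const_sub 1 |>.const_mul m).deriv.trans
      (by ring)
  have hyy : pdyy (coneBarrier m s k a b) x y =
      -(2 * m * s * k * s * k) * exp (s * (x - a)) * cosh (s * k * (y - b)) := by
    simp only [pdyy, hy]
    exact ((hS y).const_mul _).deriv.trans (by ring)
  rw [waveOp, hxx, hyy, hx]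
  ring

end ConeBarrier

theorem LipschitzOnWith.le_add_mul_abs_sub {φ : ℝ → ℝ} {K : NNReal} {s : Set ℝ}
    (hK : LipschitzOnWith K φ s) {k : ℝ} (hk : (K : ℝ) ≤ k) {y t : ℝ} (hy : y ∈ s) (ht : t ∈ s) :
    φ y ≤ φ t + k * |t - y| := by
  have := hK.dist_le_mul y hy t ht
  rw [Real.dist_eq, Real.dist_eq, abs_sub_comm y] at this
  nlinarith [le_abs_self (φ y - φ t), abs_nonneg (t - y)]

theorem OneSpeciesTW.coneBarrier_le_of_lipschitzOnWith {d D μ c : ℝ} {u : ℝ → ℝ → ℝ}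
    (hu : OneSpeciesTW d D μ c u) (hd : 0 ≤ d) (hmono : ∀ p ∈ posSet u, pdx u p.1 p.2 < 0)
    {φ : ℝ → ℝ} (hΓ : freeBdry u = {p : ℝ × ℝ | ∃ y < (0:ℝ), p = (φ y, y)}) {K : NNReal}
    (hK : LipschitzOnWith K φ (Iic (-1))) {m s k M x₀ y₀ : ℝ} (hk : (K : ℝ) < k) (hm : 0 < m)
    (hs : 0 < s) (hsc : d * s * (1 + k ^ 2) < c) (hM : ∀ x ≤ M, ∀ y ≤ (0:ℝ), m ≤ u x y)
    (hy₀ : y₀ ≤ -1) (hx₀ : 0 < u x₀ y₀) :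
    coneBarrier m s k (φ y₀ - (|M| + |φ (-1)|)) y₀ x₀ y₀ ≤ u x₀ y₀ := by
  set a := φ y₀ - (|M| + |φ (-1)|)
  have hk₀ : 0 < k := K.coe_nonneg.trans_lt hk
  have hrow : ∀ z t, M ≤ z → -1 ≤ t → a ≤ z + k * |t - y₀| := by
    intro z t hz ht
    have hφ := hK.le_add_mul_abs_sub hk.le hy₀ (le_refl (-1 : ℝ))
    have habs : |-1 - y₀| ≤ |t - y₀| := by
      rw [abs_of_nonneg (by linarith), abs_of_nonneg (by linarith)]
      linarith
    nlinarith [le_abs_self (φ (-1)), neg_abs_le M]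
  have hW := contDiff_coneBarrier (m := m) (s := s) (k := k) (a := a) (b := y₀)
  refine hu.le_of_strictSubsolution hd hW.continuous.continuousOn hW.contDiffOn (fun p _ => ?_)
    ?_ (fun x => ?_) (fun p hp => ?_) (p := (x₀, y₀)) ⟨hy₀.trans (by norm_num), hx₀⟩
  · rw [waveOp_coneBarrier]
    have := mul_pos (exp_pos (s * (p.1 - a))) (cosh_pos (s * k * (p.2 - y₀)))
    have : 2 * m * s * (d * s * (1 + k ^ 2) - c) < 0 :=
      mul_neg_of_pos_of_neg (by positivity) (by linarith)
    nlinarith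
  · refine (isBounded_coneBarrier_pos (a := a) (b := y₀) hm.le hs.le hk₀ M).subset
      fun p ⟨hp₂, hlt⟩ => ⟨?_, ?_⟩
    · by_contra! hpM
      linarith [coneBarrier_le (s := s) (k := k) (a := a) (b := y₀) hm.le p.1 p.2,
        hM p.1 hpM.le p.2 hp₂]
    · exact (hu.mem01 p.1 p.2 hp₂).1.trans_lt hlt
  · rcases le_or_gt x M with hxM | hxM
    · exact (coneBarrier_le hm.le x 0).trans (hM x hxM 0 le_rfl)
    · exact (coneBarrier_nonpos hm.le hs.le (hrow x 0 hxM.le (by norm_num))).trans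
        (hu.mem01 x 0 le_rfl).1
  · have hpΓ := hp
    rw [hΓ] at hpΓ
    obtain ⟨t, ht, rfl⟩ := hpΓ
    refine coneBarrier_nonpos hm.le hs.le ?_
    rcases le_or_gt t (-1) with ht₁ | ht₁
    · have := hK.le_add_mul_abs_sub hk.le hy₀ ht₁
      have : 0 ≤ |M| + |φ (-1)| := by positivity
      linarith
    · refine hrow _ _ (le_of_lt ?_) ht₁.le
      exact hu.lt_of_eq_zero hmono ht (hm.trans_le (hM M le_rfl t ht.le))
        (hu.eq_zero_of_mem_freeBdry hp)

theorem liminf_far_from_free_boundary_general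
    (d D μ c : ℝ) (hd : 0 < d)
    (u : ℝ → ℝ → ℝ) (hu : OneSpeciesTW d D μ c u)
    (hmono : ∀ p ∈ posSet u, pdx u p.1 p.2 < 0)
    (φ : ℝ → ℝ)
    (hΓ : freeBdry u = {p : ℝ × ℝ | ∃ y < (0:ℝ), p = (φ y, y)})
    (hφLip : ∃ K : NNReal, LipschitzOnWith K φ (Iic (-1))) :
    ∀ ε > (0:ℝ), ∃ R > (0:ℝ), ∀ x y : ℝ, y ≤ -R → 0 < u x y →
      R ≤ Metric.infDist (x, y) (freeBdry u) → 1 - ε ≤ u x y := by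
  intro ε hε
  obtain hε₁ | hε₁ := le_or_gt 1 ε
  · exact ⟨1, one_pos, fun x y hy _ _ => by linarith [(hu.mem01 x y (by linarith)).1]⟩
  obtain ⟨M, hM⟩ := hu.lim_left (ε / 4) (by positivity)
  obtain ⟨K, hK⟩ := hφLip
  set s := c / (2 * d * (1 + ((K : ℝ) + 1) ^ 2))
  set C := |M| + |φ (-1)|
  have hs : 0 < s := div_pos hu.c_pos (by positivity)
  have hsc : d * s * (1 + ((K : ℝ) + 1) ^ 2) < c := by
    simp only [s]
    field_simp
    linarith [hu.c_pos]
  refine ⟨max 1 (C - log (ε / 4) / s), by positivity, fun x₀ y₀ hy₀ hx₀ hdist => ?_⟩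
  have hy₀' : y₀ ≤ -1 := hy₀.trans (neg_le_neg (le_max_left _ _))
  have hmem : (φ y₀, y₀) ∈ freeBdry u := hΓ ▸ ⟨y₀, by linarith, rfl⟩
  have hlt := hu.lt_of_eq_zero hmono (by linarith) hx₀ (hu.eq_zero_of_mem_freeBdry hmem)
  have hgap : C - log (ε / 4) / s ≤ φ y₀ - x₀ := by
    refine (le_max_right _ _).trans
      (hdist.trans ((Metric.infDist_le_dist_of_mem hmem).trans_eq ?_))
    rw [Prod.dist_eq, dist_self, Real.dist_eq, abs_of_neg (by linarith)]
    simp [hlt.le]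
  have hexp : exp (s * (x₀ - (φ y₀ - C))) ≤ ε / 4 := by
    have h : x₀ - (φ y₀ - C) ≤ log (ε / 4) / s := by linarith
    rw [le_div_iff₀ hs, mul_comm] at h
    exact (exp_le_exp.2 h).trans_eq (exp_log (by positivity))
  have hW := hu.coneBarrier_le_of_lipschitzOnWith hd.le hmono hΓ hK (lt_add_one (K : ℝ))
    (m := 1 - ε / 4) (by linarith) hs hsc
    (fun x hx y hy => by linarith [(abs_lt.1 (hM x hx y hy)).1]) hy₀' hx₀
  rw [coneBarrier_apply_self] at hW
  nlinarith

/-- Proposition 4.2: `u` tends to 1 deep inside the positivity set.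
For a travelling wave `(c,u)` of the one-species problem with `u` globally Lipschitz,
`∂ₓu < 0` on `Ω`, free boundary the locally Lipschitz analytic graph
`Γ = {(φ(y),y) : y < 0}`, `(0,0) ∈ closure Γ`, and `φ` Lipschitz on `(-∞,-1]`:
the liminf of `u` over points of `Ω` with `y → -∞` and `dist(·,Γ) → +∞` is `1`,
i.e. for every `ε > 0` there is `R > 0` such that `u(x,y) ≥ 1 - ε` whenever
`u(x,y) > 0`, `y ≤ -R` and `dist((x,y),Γ) ≥ R`. -/
theorem liminf_far_from_free_boundary
    (d D μ c : ℝ) (hd : 0 < d) (hD : 0 < D) (hμ : 0 < μ)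
    (u : ℝ → ℝ → ℝ) (hu : OneSpeciesTW d D μ c u)
    (hLip : ∃ K : NNReal, LipschitzOnWith K (fun p : ℝ × ℝ => u p.1 p.2) lowerH)
    (hmono : ∀ p ∈ posSet u, pdx u p.1 p.2 < 0)
    (φ : ℝ → ℝ)
    (hφa : AnalyticOnNhd ℝ φ (Iio 0))
    (hφl : ∀ y < (0:ℝ), ∃ ε > 0, ∃ K : NNReal, LipschitzOnWith K φ (Metric.ball y ε))
    (hΓ : freeBdry u = {p : ℝ × ℝ | ∃ y < (0:ℝ), p = (φ y, y)})
    (h0 : ((0:ℝ), (0:ℝ)) ∈ closure (freeBdry u))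
    (hφLip : ∃ K : NNReal, LipschitzOnWith K φ (Iic (-1))) :
    ∀ ε > (0:ℝ), ∃ R > (0:ℝ), ∀ x y : ℝ, y ≤ -R → 0 < u x y →
      R ≤ Metric.infDist (x, y) (freeBdry u) → 1 - ε ≤ u x y :=
  liminf_far_from_free_boundary_general d D μ c hd u hu hmono φ hΓ hφLip
end
end

section
/- Let d, D, c, μ, L > 0 and let α > 0, β > 0 satisfy -d(α² + β²) + cα = 0 and -Dα² + cα + β·cosh(βL)/(sinh(βL) + dβ·cosh(βL)) = 0, and set γ = μ/(sinh(βL) + dβ·cosh(βL)). Then the pair u(x) = e^{αx}, v(x,y) = γ e^{αx} sinh(β(y+L)) satisfies, on the strip ℝ×[-L,0]: (i) -dΔv + c∂ₓv = 0 at every point; (ii) the road equation -Du''(x) + cu'(x) + (1/μ)∂_yv(x,0) = 0 for every x; (iii) the exchange condition d∂_yv(x,0) = μu(x) - v(x,0) for every x; (iv) v(x,-L) = 0 for every x; and (v) u(x) → 0 and v(x,y) → 0 as x → -∞, uniformly in y ∈ [-L,0]. -/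
open Real Filter Topology Set

noncomputable section

/-! The ansatz separates variables, `v x y = e^{αx} · γ sinh(β(y+L))`, so every partial derivative
is a one-variable derivative of a factor; the bulk and road equations then reduce to the two
dispersion relations, and the exchange condition to the choice of `γ`. Decay is uniform in `y`
because the vertical profile is bounded on the compact interval `[-L, 0]`. -/

section Separable

variable {v : ℝ → ℝ → ℝ} {k : ℝ} {f g : ℝ → ℝ}

theorem pdx_of_eq_mul (hv : ∀ x y, v x y = k * f x * g y) (x y : ℝ) :
    pdx v x y = k * deriv f x * g y := by
  simp only [pdx, hv]
  rw [deriv_mul_const_field, deriv_const_mul_field]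

theorem pdy_of_eq_mul (hv : ∀ x y, v x y = k * f x * g y) (x y : ℝ) :
    pdy v x y = k * f x * deriv g y := by
  simp only [pdy, hv]
  exact deriv_const_mul_field _

theorem pdxx_of_eq_mul (hv : ∀ x y, v x y = k * f x * g y) (x y : ℝ) :
    pdxx v x y = k * deriv (deriv f) x * g y := by
  simp only [pdxx, pdx_of_eq_mul hv]
  rw [deriv_mul_const_field, deriv_const_mul_field]

theorem pdyy_of_eq_mul (hv : ∀ x y, v x y = k * f x * g y) (x y : ℝ) :
    pdyy v x y = k * f x * deriv (deriv g) y := by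
  simp only [pdyy, pdy_of_eq_mul hv]
  exact deriv_const_mul_field _

end Separable

theorem deriv_exp_mul (a : ℝ) : deriv (fun x => exp (a * x)) = fun x => a * exp (a * x) :=
  funext fun x => by simpa [mul_comm] using ((hasDerivAt_id x).const_mul a).exp.deriv

theorem deriv_deriv_exp_mul (a : ℝ) :
    deriv (deriv fun x => exp (a * x)) = fun x => a * (a * exp (a * x)) := by
  rw [deriv_exp_mul, deriv_const_mul_field', deriv_exp_mul]

theorem deriv_sinh_mul_add (b s : ℝ) :
    deriv (fun y => sinh (b * (y + s))) = fun y => b * cosh (b * (y + s)) :=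
  funext fun y => by simp [mul_comm]

theorem deriv_deriv_sinh_mul_add (b s : ℝ) :
    deriv (deriv fun y => sinh (b * (y + s))) = fun y => b * (b * sinh (b * (y + s))) := by
  rw [deriv_sinh_mul_add, deriv_const_mul_field']
  exact funext fun y => by simp [mul_comm]

theorem sinh_add_mul_cosh_pos {t k : ℝ} (ht : 0 < t) (hk : 0 ≤ k) : 0 < sinh t + k * cosh t := by
  have := sinh_pos_iff.2 ht
  have := cosh_pos t
  positivity

theorem tendstoUniformlyOn_mul_of_tendsto_zero {ι : Type*} {l : Filter ι} {f : ι → ℝ}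
    {g : ℝ → ℝ} {S : Set ℝ} {C : ℝ} (hf : Tendsto f l (𝓝 0)) (hg : ∀ y ∈ S, |g y| ≤ C) :
    TendstoUniformlyOn (fun x y => f x * g y) 0 l S := by
  rw [Metric.tendstoUniformlyOn_iff]
  intro ε hε
  filter_upwards [Metric.tendsto_nhds.1 hf (ε / (|C| + 1)) (by positivity)] with x hx y hy
  rw [Real.dist_0_eq_abs] at hx
  calc dist ((0 : ℝ → ℝ) y) (f x * g y) = |f x| * |g y| := by simp [dist_eq_norm]
    _ ≤ ε / (|C| + 1) * |C| :=
      mul_le_mul hx.le ((hg y hy).trans (le_abs_self C)) (abs_nonneg _) (by positivity)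
    _ < ε := by
      rw [div_mul_eq_mul_div, div_lt_iff₀ (by positivity)]
      linarith

theorem IsCompact.exists_forall_abs_mul_lt {f g : ℝ → ℝ} {S : Set ℝ}
    (hf : Tendsto f atBot (𝓝 0)) (hS : IsCompact S) (hg : ContinuousOn g S) :
    ∀ ε > 0, ∃ M, ∀ x ≤ M, ∀ y ∈ S, |f x * g y| < ε := by
  intro ε hε
  obtain ⟨C, hC⟩ := hS.exists_bound_of_continuousOn hg
  have huniform := tendstoUniformlyOn_mul_of_tendsto_zero hf hC
  obtain ⟨M, hM⟩ := eventually_atBot.1 (Metric.tendstoUniformlyOn_iff.1 huniform ε hε)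
  exact ⟨M, fun x hx y hy => by simpa using hM x hx y hy⟩

theorem exponential_solutions_two_species_general
    (d D c μ L α β γ : ℝ) (hd : 0 < d) (hμ : 0 < μ)
    (hL : 0 < L) (hα : 0 < α) (hβ : 0 < β)
    (hrel1 : -d * (α ^ 2 + β ^ 2) + c * α = 0)
    (hrel2 : -D * α ^ 2 + c * α
        + β * Real.cosh (β * L)
          / (Real.sinh (β * L) + d * β * Real.cosh (β * L)) = 0)
    (hγ : γ = μ / (Real.sinh (β * L) + d * β * Real.cosh (β * L)))
    (u : ℝ → ℝ) (v : ℝ → ℝ → ℝ)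
    (hu : ∀ x : ℝ, u x = Real.exp (α * x))
    (hv : ∀ x y : ℝ, v x y = γ * Real.exp (α * x) * Real.sinh (β * (y + L))) :
    (∀ x y : ℝ, -L ≤ y → y ≤ 0 →
        -d * (pdxx v x y + pdyy v x y) + c * pdx v x y = 0) ∧
    (∀ x : ℝ, -D * deriv (deriv u) x + c * deriv u x + (1/μ) * pdy v x 0 = 0) ∧
    (∀ x : ℝ, d * pdy v x 0 = μ * u x - v x 0) ∧
    (∀ x : ℝ, v x (-L) = 0) ∧
    Tendsto u atBot (𝓝 0) ∧
    (∀ ε > (0:ℝ), ∃ M : ℝ, ∀ x ≤ M, ∀ y : ℝ, -L ≤ y → y ≤ 0 → |v x y| < ε) := by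
  have hden := sinh_add_mul_cosh_pos (mul_pos hβ hL) (mul_pos hd hβ).le
  have hγden : γ * (sinh (β * L) + d * β * cosh (β * L)) = μ := by
    rw [hγ, div_mul_cancel₀ _ hden.ne']
  have hu' : u = fun x => exp (α * x) := funext hu
  have hexp_tendsto : Tendsto (fun x => exp (α * x)) atBot (𝓝 0) :=
    tendsto_exp_atBot.comp (tendsto_id.const_mul_atBot hα)
  refine ⟨fun x y _ _ => ?bulk, fun x => ?road, fun x => ?exchange, fun x => ?bottom,
    hu' ▸ hexp_tendsto, fun ε hε => ?decay⟩
  case bulk =>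
    rw [pdxx_of_eq_mul hv, pdyy_of_eq_mul hv, pdx_of_eq_mul hv, deriv_deriv_exp_mul,
      deriv_deriv_sinh_mul_add, deriv_exp_mul]
    linear_combination (γ * exp (α * x) * sinh (β * (y + L))) * hrel1
  case road =>
    have hγμ : 1 / μ * γ = 1 / (sinh (β * L) + d * β * cosh (β * L)) := by
      rw [hγ]; field_simp
    rw [hu', deriv_deriv_exp_mul, deriv_exp_mul, pdy_of_eq_mul hv, deriv_sinh_mul_add]
    simp only [zero_add]
    linear_combination exp (α * x) * hrel2 + exp (α * x) * β * cosh (β * L) * hγμ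
  case exchange =>
    simp only [pdy_of_eq_mul hv, deriv_sinh_mul_add, hv, hu, zero_add]
    linear_combination exp (α * x) * hγden
  case bottom => simp [hv]
  case decay =>
    obtain ⟨M, hM⟩ := isCompact_Icc.exists_forall_abs_mul_lt
      (by simpa using hexp_tendsto.const_mul γ) (g := fun y => sinh (β * (y + L))) (by fun_prop) ε hε
    exact ⟨M, fun x hx y hy₁ hy₂ => by simpa [hv] using hM x hx y ⟨hy₁, hy₂⟩⟩

/-- Exponential solutions of the linearized truncated two-species
problem. If `α, β > 0` satisfy `-d(α² + β²) + cα = 0` and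
`-Dα² + cα + β·cosh(βL)/(sinh(βL) + dβ·cosh(βL)) = 0`, and
`γ = μ/(sinh(βL) + dβ·cosh(βL))`, then `u(x) = e^{αx}`,
`v(x,y) = γ e^{αx} sinh(β(y+L))` solve the linearized system on the strip:
the bulk equation, the road equation, the exchange condition, the bottom Dirichlet
condition, and decay as `x → -∞` (uniformly in `y` for `v`). -/
theorem exponential_solutions_two_species
    (d D c μ L α β γ : ℝ) (hd : 0 < d) (hD : 0 < D) (hc : 0 < c) (hμ : 0 < μ)
    (hL : 0 < L) (hα : 0 < α) (hβ : 0 < β)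
    (hrel1 : -d * (α ^ 2 + β ^ 2) + c * α = 0)
    (hrel2 : -D * α ^ 2 + c * α
        + β * Real.cosh (β * L)
          / (Real.sinh (β * L) + d * β * Real.cosh (β * L)) = 0)
    (hγ : γ = μ / (Real.sinh (β * L) + d * β * Real.cosh (β * L)))
    (u : ℝ → ℝ) (v : ℝ → ℝ → ℝ)
    (hu : ∀ x : ℝ, u x = Real.exp (α * x))
    (hv : ∀ x y : ℝ, v x y = γ * Real.exp (α * x) * Real.sinh (β * (y + L))) :
    (∀ x y : ℝ, -L ≤ y → y ≤ 0 →
        -d * (pdxx v x y + pdyy v x y) + c * pdx v x y = 0) ∧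
    (∀ x : ℝ, -D * deriv (deriv u) x + c * deriv u x + (1/μ) * pdy v x 0 = 0) ∧
    (∀ x : ℝ, d * pdy v x 0 = μ * u x - v x 0) ∧
    (∀ x : ℝ, v x (-L) = 0) ∧
    Tendsto u atBot (𝓝 0) ∧
    (∀ ε > (0:ℝ), ∃ M : ℝ, ∀ x ≤ M, ∀ y : ℝ, -L ≤ y → y ≤ 0 → |v x y| < ε) :=
  exponential_solutions_two_species_general d D c μ L α β γ hd hμ hL hα hβ hrel1 hrel2 hγ u v hu hv
end
end

section
/- There is no function u : (-∞,0] → [0,∞) with all of the following properties: u is continuous and bounded; u(0) = 0; the positivity set {u > 0} is nonempty; u is twice differentiable with u'' = 0 on the open set {u > 0}; and at every boundary point b ∈ (-∞,0) of {u > 0}, the one-sided derivative of u at b taken from within {u > 0} exists and has absolute value 1. Equivalently, the only bounded solution of the one-dimensional free boundary problem -u'' = 0 on {u > 0}, |u'| = 1 on ∂{u > 0}, u(0) = 0 on the half-line is u ≡ 0 (the solutions with nonempty positivity set are exactly the unbounded functions (y + a)⁻ = max(-(y+a),0)). -/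
open Real Filter Topology Set

/-- On a closed interval `[s,t]` contained in the positivity set (with `t < 0`),
`u` has constant derivative and is affine. -/
private lemma affine_on_pos (u : ℝ → ℝ)
    (h6 : ∀ y ∈ {y : ℝ | y ≤ 0 ∧ 0 < u y},
        DifferentiableAt ℝ u y ∧ HasDerivAt (deriv u) 0 y)
    {s t : ℝ} (hst : s ≤ t) (ht : t < 0)
    (hpos : ∀ x ∈ Icc s t, 0 < u x) :
    deriv u t = deriv u s ∧ u t = u s + deriv u s * (t - s) := by
  have hmem : ∀ x ∈ Icc s t, x ∈ {y : ℝ | y ≤ 0 ∧ 0 < u y} := fun x hx =>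
    ⟨le_of_lt (lt_of_le_of_lt hx.2 ht), hpos x hx⟩
  have hd : ∀ x ∈ Icc s t, HasDerivAt (deriv u) 0 x := fun x hx => (h6 x (hmem x hx)).2
  have hcontd : ContinuousOn (deriv u) (Icc s t) := fun x hx =>
    ((hd x hx).differentiableAt.continuousAt).continuousWithinAt
  have hconst : ∀ x ∈ Icc s t, deriv u x = deriv u s :=
    constant_of_has_deriv_right_zero hcontd (fun x hx =>
      (hd x (Ico_subset_Icc_self hx)).hasDerivWithinAt)
  refine ⟨hconst t (right_mem_Icc.2 hst), ?_⟩
  set c := deriv u s with hc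
  have hg : ∀ x ∈ Icc s t, u x - c * x = u s - c * s := by
    apply constant_of_has_deriv_right_zero
    · intro x hx
      exact (((h6 x (hmem x hx)).1.continuousAt).sub
        (continuous_const.mul continuous_id).continuousAt).continuousWithinAt
    · intro x hx
      have hdx : HasDerivAt u (deriv u x) x :=
        ((h6 x (hmem x (Ico_subset_Icc_self hx))).1).hasDerivAt
      have hcy : HasDerivAt (fun y : ℝ => c * y) c x := by
        simpa using (hasDerivAt_id x).const_mul c
      have h0 : HasDerivAt (fun y => u y - c * y) (deriv u x - c) x := hdx.sub hcy
      rw [hconst x (Ico_subset_Icc_self hx), sub_self] at h0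
      exact h0.hasDerivWithinAt
  have h1 := hg t (right_mem_Icc.2 hst)
  linear_combination h1

/-- One-dimensional rigidity. There is no bounded, continuous,
nonnegative function `u` on the half-line `(-∞,0]` with `u(0) = 0`, nonempty positivity
set, `u'' = 0` on `{u > 0}`, and one-sided derivative of modulus `1` (taken from within
the positivity set) at every boundary point `b < 0` of `{u > 0}`. Equivalently, the only
bounded solution of `-u'' = 0` on `{u > 0}`, `|u'| = 1` on `∂{u > 0}`, `u(0) = 0` is
`u ≡ 0`. -/
theorem one_dimensional_rigidity :
    ¬ ∃ u : ℝ → ℝ,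
      ContinuousOn u (Iic 0) ∧
      (∀ y ≤ (0:ℝ), 0 ≤ u y) ∧
      (∃ C : ℝ, ∀ y ≤ (0:ℝ), u y ≤ C) ∧
      u 0 = 0 ∧
      ({y : ℝ | y ≤ 0 ∧ 0 < u y}.Nonempty) ∧
      (∀ y ∈ {y : ℝ | y ≤ 0 ∧ 0 < u y},
        DifferentiableAt ℝ u y ∧ HasDerivAt (deriv u) 0 y) ∧
      (∀ b ∈ frontier {y : ℝ | y ≤ 0 ∧ 0 < u y}, b < 0 →
        ∃ ℓ : ℝ, HasDerivWithinAt u ℓ {y : ℝ | y ≤ 0 ∧ 0 < u y} b ∧ |ℓ| = 1) := by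
  rintro ⟨u, hcont, hnn, ⟨C, hC⟩, hu0, ⟨y₀, hy₀le, hy₀pos⟩, h6, -⟩
  have hy₀ : y₀ < 0 := by
    rcases lt_or_eq_of_le hy₀le with h | h
    · exact h
    · exfalso; rw [h, hu0] at hy₀pos; exact lt_irrefl 0 hy₀pos
  -- the first zero to the right of y₀
  set Z : Set ℝ := Icc y₀ 0 ∩ u ⁻¹' {0} with hZ
  have hZclosed : IsClosed Z :=
    (hcont.mono (Icc_subset_Iic_self)).preimage_isClosed_of_isClosed isClosed_Icc
      isClosed_singleton
  have hZne : Z.Nonempty := ⟨0, ⟨right_mem_Icc.2 hy₀le, by simpa using hu0⟩⟩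
  have hZbdd : BddBelow Z := ⟨y₀, fun x hx => hx.1.1⟩
  set b := sInf Z with hbdef
  have hbZ : b ∈ Z := hZclosed.csInf_mem hZne hZbdd
  have hub : u b = 0 := hbZ.2
  have hble : b ≤ 0 := hbZ.1.2
  have hy₀b : y₀ < b := by
    rcases lt_or_eq_of_le hbZ.1.1 with h | h
    · exact h
    · exfalso; rw [h, hub] at hy₀pos; exact lt_irrefl 0 hy₀pos
  have hposIco : ∀ x ∈ Ico y₀ b, 0 < u x := by
    intro x hx
    have hx0 : x ≤ 0 := le_of_lt (lt_of_lt_of_le hx.2 hble)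
    rcases (hnn x hx0).lt_or_eq with h | h
    · exact h
    · exfalso
      have : x ∈ Z := ⟨⟨hx.1, hx0⟩, by simpa using h.symm⟩
      exact absurd (csInf_le hZbdd this) (not_le.2 hx.2)
  set m := deriv u y₀ with hm
  have haff_right : ∀ z ∈ Ico y₀ b, u z = u y₀ + m * (z - y₀) := by
    intro z hz
    have hz0 : z < 0 := lt_of_lt_of_le hz.2 hble
    exact (affine_on_pos u h6 hz.1 hz0
      (fun x hx => hposIco x ⟨hx.1, lt_of_le_of_lt hx.2 hz.2⟩)).2
  -- pass to the limit z → b⁻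
  have hub_eq : u b = u y₀ + m * (b - y₀) := by
    have hne : (𝓝[Ico y₀ b] b).NeBot := by
      refine mem_closure_iff_nhdsWithin_neBot.1 ?_
      rw [closure_Ico hy₀b.ne]
      exact right_mem_Icc.2 hy₀b.le
    have h1 : Tendsto u (𝓝[Ico y₀ b] b) (𝓝 (u b)) :=
      (hcont b (mem_Iic.2 hble)).mono
        (fun x hx => mem_Iic.2 (le_of_lt (lt_of_lt_of_le hx.2 hble)))
    have hcf : Continuous fun z : ℝ => u y₀ + m * (z - y₀) := by fun_prop
    have h2 : Tendsto (fun z => u y₀ + m * (z - y₀)) (𝓝[Ico y₀ b] b)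
        (𝓝 (u y₀ + m * (b - y₀))) :=
      (hcf.tendsto b).mono_left nhdsWithin_le_nhds
    have h3 : Tendsto u (𝓝[Ico y₀ b] b) (𝓝 (u y₀ + m * (b - y₀))) := by
      refine h2.congr' ?_
      filter_upwards [self_mem_nhdsWithin] with z hz
      exact (haff_right z hz).symm
    exact tendsto_nhds_unique h1 h3
  have hkey : u y₀ + m * (b - y₀) = 0 := by rw [← hub_eq]; exact hub
  have hmneg : m < 0 := by
    rcases lt_trichotomy m 0 with h | h | h
    · exact h
    · exfalso; rw [h] at hkey; simp at hkey; linarith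
    · exfalso; nlinarith [mul_pos h (sub_pos.2 hy₀b)]
  by_cases hA : ∃ a, a ≤ y₀ ∧ u a = 0
  · -- there is a zero to the left of y₀ : slope must vanish, contradiction
    obtain ⟨a₀, ha₀le, ha₀⟩ := hA
    set Z' : Set ℝ := Iic y₀ ∩ u ⁻¹' {0} with hZ'
    have hZ'closed : IsClosed Z' :=
      (hcont.mono (Iic_subset_Iic.2 hy₀le)).preimage_isClosed_of_isClosed isClosed_Iic
        isClosed_singleton
    have hZ'ne : Z'.Nonempty := ⟨a₀, ⟨mem_Iic.2 ha₀le, by simpa using ha₀⟩⟩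
    have hZ'bdd : BddAbove Z' := ⟨y₀, fun x hx => hx.1⟩
    set a := sSup Z' with hadef
    have haZ : a ∈ Z' := hZ'closed.csSup_mem hZ'ne hZ'bdd
    have hua : u a = 0 := haZ.2
    have haley : a ≤ y₀ := haZ.1
    have halt : a < y₀ := by
      rcases lt_or_eq_of_le haley with h | h
      · exact h
      · exfalso; rw [h] at hua; rw [hua] at hy₀pos; exact lt_irrefl 0 hy₀pos
    have hposIoc : ∀ x ∈ Ioc a y₀, 0 < u x := by
      intro x hx
      have hx0 : x ≤ 0 := le_trans hx.2 hy₀le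
      rcases (hnn x hx0).lt_or_eq with h | h
      · exact h
      · exfalso
        have : x ∈ Z' := ⟨mem_Iic.2 hx.2, by simpa using h.symm⟩
        exact absurd (le_csSup hZ'bdd this) (not_le.2 hx.1)
    have haff_left : ∀ z ∈ Ioc a y₀, u z = u y₀ + m * (z - y₀) := by
      intro z hz
      obtain ⟨hd, hv⟩ := affine_on_pos u h6 hz.2 hy₀
        (fun x hx => hposIoc x ⟨lt_of_lt_of_le hz.1 hx.1, hx.2⟩)
      rw [hm, hd]
      linear_combination -hv
    have hua_eq : u a = u y₀ + m * (a - y₀) := by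
      have hne : (𝓝[Ioc a y₀] a).NeBot := by
        refine mem_closure_iff_nhdsWithin_neBot.1 ?_
        rw [closure_Ioc halt.ne]
        exact left_mem_Icc.2 halt.le
      have h1 : Tendsto u (𝓝[Ioc a y₀] a) (𝓝 (u a)) :=
        (hcont a (mem_Iic.2 (le_trans haley hy₀le))).mono
          (fun x hx => mem_Iic.2 (le_trans hx.2 hy₀le))
      have hcf : Continuous fun z : ℝ => u y₀ + m * (z - y₀) := by fun_prop
      have h2 : Tendsto (fun z => u y₀ + m * (z - y₀)) (𝓝[Ioc a y₀] a)
          (𝓝 (u y₀ + m * (a - y₀))) :=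
        (hcf.tendsto a).mono_left nhdsWithin_le_nhds
      have h3 : Tendsto u (𝓝[Ioc a y₀] a) (𝓝 (u y₀ + m * (a - y₀))) := by
        refine h2.congr' ?_
        filter_upwards [self_mem_nhdsWithin] with z hz
        exact (haff_left z hz).symm
      exact tendsto_nhds_unique h1 h3
    have hkey' : u y₀ + m * (a - y₀) = 0 := by rw [← hua_eq]; exact hua
    -- m * (b - a) = 0 with m < 0 and a < b : contradiction
    nlinarith [mul_pos (neg_pos.2 hmneg) (sub_pos.2 (lt_trans halt hy₀b))]
  · -- u > 0 on all of (-∞, y₀] : u is affine with negative slope, unbounded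
    push_neg at hA
    have hposleft : ∀ z ≤ y₀, 0 < u z := fun z hz =>
      lt_of_le_of_ne (hnn z (le_trans hz hy₀le)) (Ne.symm (hA z hz))
    have haff_left : ∀ z ≤ y₀, u z = u y₀ + m * (z - y₀) := by
      intro z hz
      obtain ⟨hd, hv⟩ := affine_on_pos u h6 hz hy₀
        (fun x hx => hposleft x hx.2)
      rw [hm, hd]
      linear_combination -hv
    have hmne : m ≠ 0 := ne_of_lt hmneg
    set z := y₀ + (C + 1 - u y₀) / m with hzdef
    have hCy : u y₀ ≤ C := hC y₀ hy₀le
    have hquot : (C + 1 - u y₀) / m < 0 :=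
      div_neg_of_pos_of_neg (by linarith) hmneg
    have hzle : z ≤ y₀ := by rw [hzdef]; linarith
    have huz : u z = C + 1 := by
      rw [haff_left z hzle, hzdef]
      field_simp
      ring
    have := hC z (le_trans hzle hy₀le)
    rw [huz] at this
    linarith
end
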